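/- For every a > 0, every row vector b ∈ ℝ^n, and every m ∈ O(h), the matrix p(a,b,m) satisfies p(a,b,m)ᵀ h̃ p(a,b,m) = h̃ and p(a,b,m) e_0 = a e_0, so p(a,b,m) ∈ P; moreover the map (a,b,m) ↦ p(a,b,m) from ℝ_{>0} × ℝ^n × O(h) to P is injective. Hence P is parametrized bijectively by ℝ_{>0} × ℝ^n × O(h). -/

import Mathlib

open Matrix

noncomputable section

abbrev Idx (p q : ℕ) : Type := Unit ⊕ (Fin (p + q)) ⊕ Unit

/-- The diagonal quadratic form of signature `(p,q)` on `ℝ^n`, `n = p + q`. -/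
def hMat (p q : ℕ) : Matrix (Fin (p + q)) (Fin (p + q)) ℝ :=
  Matrix.diagonal fun i => if (i : ℕ) < p then (1 : ℝ) else -1

/-- The quadratic form of signature `(p+1,q+1)` on `ℝ^{n+2}`, in block form
`[[0,0,1],[0,h,0],[1,0,0]]`. -/
def htMat (p q : ℕ) : Matrix (Idx p q) (Idx p q) ℝ :=
  Matrix.of fun I J =>
    match I, J with
    | Sum.inl _, Sum.inr (Sum.inr _) => (1 : ℝ)
    | Sum.inr (Sum.inr _), Sum.inl _ => 1
    | Sum.inr (Sum.inl i), Sum.inr (Sum.inl j) => hMat p q i j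
    | _, _ => 0

/-- The first standard basis vector `e₀` of `ℝ^{n+2}`. -/
def e0 (p q : ℕ) : Idx p q → ℝ := fun I =>
  match I with
  | Sum.inl _ => 1
  | _ => 0

/-- `c = -(2a)⁻¹ b h⁻¹ bᵀ`. -/
def cVal (p q : ℕ) (a : ℝ) (b : Fin (p + q) → ℝ) : ℝ :=
  -(2 * a)⁻¹ * (b ⬝ᵥ ((hMat p q)⁻¹ *ᵥ b))

/-- `d = -a⁻¹ m h⁻¹ bᵀ`. -/
def dVec (p q : ℕ) (a : ℝ) (b : Fin (p + q) → ℝ)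
    (m : Matrix (Fin (p + q)) (Fin (p + q)) ℝ) : Fin (p + q) → ℝ :=
  (-a⁻¹) • (m *ᵥ ((hMat p q)⁻¹ *ᵥ b))

/-- The element `p(a,b,m)` of the parabolic subgroup, in block form
`[[a,b,c],[0,m,d],[0,0,a⁻¹]]`. -/
def pMat (p q : ℕ) (a : ℝ) (b : Fin (p + q) → ℝ)
    (m : Matrix (Fin (p + q)) (Fin (p + q)) ℝ) : Matrix (Idx p q) (Idx p q) ℝ :=
  Matrix.of fun I J =>
    match I, J with
    | Sum.inl _, Sum.inl _ => a
    | Sum.inl _, Sum.inr (Sum.inl j) => b j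
    | Sum.inl _, Sum.inr (Sum.inr _) => cVal p q a b
    | Sum.inr (Sum.inl i), Sum.inr (Sum.inl j) => m i j
    | Sum.inr (Sum.inl i), Sum.inr (Sum.inr _) => dVec p q a b m i
    | Sum.inr (Sum.inr _), Sum.inr (Sum.inr _) => a⁻¹
    | _, _ => 0

/-- `|x|² = xᵀ h x`. -/
def normSq (p q : ℕ) (x : Fin (p + q) → ℝ) : ℝ := x ⬝ᵥ (hMat p q *ᵥ x)

/-- The denominator `D(x) = a + b x - ½ c |x|²`. -/
def Dden (p q : ℕ) (a : ℝ) (b x : Fin (p + q) → ℝ) : ℝ :=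
  a + b ⬝ᵥ x - (1 / 2) * cVal p q a b * normSq p q x

/-- The conformal transformation `φ(x) = (m x - ½|x|² d)/D(x)`. -/
def phiMap (p q : ℕ) (a : ℝ) (b : Fin (p + q) → ℝ)
    (m : Matrix (Fin (p + q)) (Fin (p + q)) ℝ) (x : Fin (p + q) → ℝ) :
    Fin (p + q) → ℝ :=
  (Dden p q a b x)⁻¹ • (m *ᵥ x - ((1 / 2) * normSq p q x) • dVec p q a b m)

/-- The conformal factor `Ω(x) = D(x)⁻¹`. -/
def OmegaFn (p q : ℕ) (a : ℝ) (b : Fin (p + q) → ℝ) (x : Fin (p + q) → ℝ) : ℝ :=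
  (Dden p q a b x)⁻¹

/-- Jacobian matrix of a map at a point: `J i j = ∂ⱼ φⁱ (x)`. -/
def jacobianAt (p q : ℕ) (φ : (Fin (p + q) → ℝ) → (Fin (p + q) → ℝ))
    (x : Fin (p + q) → ℝ) : Matrix (Fin (p + q)) (Fin (p + q)) ℝ :=
  Matrix.of fun i j => fderiv ℝ φ x (Pi.single j 1) i

/-- Row vector of partial derivatives of a scalar function at a point. -/
def gradAt (p q : ℕ) (f : (Fin (p + q) → ℝ) → ℝ) (x : Fin (p + q) → ℝ) :
    Fin (p + q) → ℝ :=
  fun j => fderiv ℝ f x (Pi.single j 1)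

/-! Write `⟨u, v⟩ = u⁰ v^∞ + u^∞ v⁰ + uᵀ h v` for the form `h̃`, so that `(Aᵀ h̃ A)_{IJ}` pairs the
columns `I` and `J` of `A`. The columns of `p(a,b,m)` are `a e₀`, `(bⱼ, m eⱼ, 0)` and `(c, d, a⁻¹)`.
Since `m` is an `h`-isometry and `d = -a⁻¹ m h⁻¹ bᵀ`, one gets `mᵀ h d = -bᵀ/a`, which kills the
pairings of `(c, d, a⁻¹)` with the middle columns, and `dᵀ h d = a⁻² b h⁻¹ bᵀ = -2c/a`, which makes
`(c, d, a⁻¹)` null. Injectivity is read off the entries `a`, `b` and `m`. -/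

section Isometry

variable {n R : Type*} [Fintype n] [CommRing R] {H m : Matrix n n R}

theorem transpose_mulVec_mulVec_mulVec_of_transpose_mul_mul_eq (hm : mᵀ * H * m = H)
    (v : n → R) : mᵀ *ᵥ (H *ᵥ (m *ᵥ v)) = H *ᵥ v := by
  rw [mulVec_mulVec, mulVec_mulVec, hm]

theorem dotProduct_mulVec_mulVec_of_transpose_mul_mul_eq (hm : mᵀ * H * m = H)
    (v w : n → R) : (m *ᵥ v) ⬝ᵥ (H *ᵥ (m *ᵥ w)) = v ⬝ᵥ (H *ᵥ w) := by
  rw [← vecMul_transpose, ← dotProduct_mulVec,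
    transpose_mulVec_mulVec_mulVec_of_transpose_mul_mul_eq hm]

theorem dotProduct_mulVec_comm_of_transpose_eq (hH : Hᵀ = H) (v w : n → R) :
    v ⬝ᵥ (H *ᵥ w) = w ⬝ᵥ (H *ᵥ v) := by
  rw [dotProduct_mulVec, dotProduct_comm, ← vecMul_transpose, hH]

end Isometry

theorem hMat_mul_self (p q : ℕ) : hMat p q * hMat p q = 1 := by
  rw [hMat, diagonal_mul_diagonal, ← diagonal_one]
  congr with i
  split_ifs <;> norm_num

theorem hMat_inv (p q : ℕ) : (hMat p q)⁻¹ = hMat p q :=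
  inv_eq_left_inv (hMat_mul_self p q)

theorem hMat_transpose (p q : ℕ) : (hMat p q)ᵀ = hMat p q :=
  diagonal_transpose _

section Parabolic

variable {p q : ℕ} {a : ℝ} {b : Fin (p + q) → ℝ} {m : Matrix (Fin (p + q)) (Fin (p + q)) ℝ}

theorem transpose_mulVec_hMat_mulVec_dVec (hm : mᵀ * hMat p q * m = hMat p q) :
    mᵀ *ᵥ (hMat p q *ᵥ dVec p q a b m) = (-a⁻¹) • b := by
  rw [dVec, mulVec_smul, mulVec_smul, transpose_mulVec_mulVec_mulVec_of_transpose_mul_mul_eq hm,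
    hMat_inv, mulVec_mulVec, hMat_mul_self, one_mulVec]

theorem dVec_dotProduct_hMat_mulVec_dVec (ha : a ≠ 0) (hm : mᵀ * hMat p q * m = hMat p q) :
    dVec p q a b m ⬝ᵥ (hMat p q *ᵥ dVec p q a b m) = -(2 / a) * cVal p q a b := by
  rw [dVec, mulVec_smul, smul_dotProduct, dotProduct_smul,
    dotProduct_mulVec_mulVec_of_transpose_mul_mul_eq hm, hMat_inv, mulVec_mulVec, hMat_mul_self,
    one_mulVec, dotProduct_comm, cVal, hMat_inv, smul_eq_mul, smul_eq_mul]
  field_simp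

theorem transpose_mul_htMat_mul_apply (A : Matrix (Idx p q) (Idx p q) ℝ) (I J : Idx p q) :
    (Aᵀ * htMat p q * A) I J =
      A (.inl ()) I * A (.inr (.inr ())) J + A (.inr (.inr ())) I * A (.inl ()) J +
        (fun k => A (.inr (.inl k)) I) ⬝ᵥ (hMat p q *ᵥ fun k => A (.inr (.inl k)) J) := by
  simp only [Matrix.mul_apply, Fintype.sum_sum_type, htMat, dotProduct, mulVec, Finset.mul_sum,
    transpose_apply, of_apply, Finset.univ_unique, Finset.sum_singleton]
  simp only [mul_zero, mul_one, Finset.sum_const_zero, zero_add, add_zero, Finset.sum_mul,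
    mul_assoc]
  rw [Finset.sum_comm]
  ring

theorem pMat_transpose_mul_htMat_mul (ha : a ≠ 0) (hm : mᵀ * hMat p q * m = hMat p q) :
    (pMat p q a b m)ᵀ * htMat p q * pMat p q a b m = htMat p q := by
  have hd := transpose_mulVec_hMat_mulVec_dVec (a := a) (b := b) hm
  have hdd := dVec_dotProduct_hMat_mulVec_dVec (b := b) ha hm
  have hcol (i : Fin (p + q)) (v : Fin (p + q) → ℝ) :
      (fun k => m k i) ⬝ᵥ (hMat p q *ᵥ v) = (mᵀ *ᵥ (hMat p q *ᵥ v)) i := rfl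
  ext I J
  rw [transpose_mul_htMat_mul_apply]
  rcases I with ⟨⟩ | i | ⟨⟩ <;> rcases J with ⟨⟩ | j | ⟨⟩ <;>
    simp only [pMat, htMat, of_apply, ← Pi.zero_def, mulVec_zero, dotProduct_zero,
      zero_dotProduct, mul_zero, zero_mul, add_zero, zero_add]
  · exact mul_inv_cancel₀ ha
  · rw [← congr_fun₂ hm i j, Matrix.mul_assoc]
    rfl
  · rw [hcol, hd]
    simp only [Pi.smul_apply, smul_eq_mul]
    ring
  · exact inv_mul_cancel₀ ha
  · rw [dotProduct_mulVec_comm_of_transpose_eq (hMat_transpose p q), hcol, hd]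
    simp only [Pi.smul_apply, smul_eq_mul]
    ring
  · rw [hdd]
    ring

theorem pMat_mulVec_e0 : pMat p q a b m *ᵥ e0 p q = a • e0 p q := by
  ext (⟨⟩ | i | ⟨⟩) <;> simp [pMat, e0, mulVec, dotProduct, Fintype.sum_sum_type]

theorem pMat_inj {a₁ a₂ : ℝ} {b₁ b₂ : Fin (p + q) → ℝ}
    {m₁ m₂ : Matrix (Fin (p + q)) (Fin (p + q)) ℝ} (h : pMat p q a₁ b₁ m₁ = pMat p q a₂ b₂ m₂) :
    a₁ = a₂ ∧ b₁ = b₂ ∧ m₁ = m₂ := by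
  refine ⟨?_, funext fun j => ?_, ext fun i j => ?_⟩
  · simpa [pMat] using congr_fun₂ h (.inl ()) (.inl ())
  · simpa [pMat] using congr_fun₂ h (.inl ()) (.inr (.inl j))
  · simpa [pMat] using congr_fun₂ h (.inr (.inl i)) (.inr (.inl j))

end Parabolic

theorem statement1_general (p q : ℕ) :
    (∀ (a : ℝ), 0 < a → ∀ (b : Fin (p + q) → ℝ)
        (m : Matrix (Fin (p + q)) (Fin (p + q)) ℝ),
        mᵀ * hMat p q * m = hMat p q →
        (pMat p q a b m)ᵀ * htMat p q * pMat p q a b m = htMat p q ∧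
        pMat p q a b m *ᵥ e0 p q = a • e0 p q) ∧
    (∀ (a₁ a₂ : ℝ) (b₁ b₂ : Fin (p + q) → ℝ)
        (m₁ m₂ : Matrix (Fin (p + q)) (Fin (p + q)) ℝ),
        0 < a₁ → 0 < a₂ →
        m₁ᵀ * hMat p q * m₁ = hMat p q → m₂ᵀ * hMat p q * m₂ = hMat p q →
        pMat p q a₁ b₁ m₁ = pMat p q a₂ b₂ m₂ →
        a₁ = a₂ ∧ b₁ = b₂ ∧ m₁ = m₂) :=
  ⟨fun _ ha _ _ hm => ⟨pMat_transpose_mul_htMat_mul ha.ne' hm, pMat_mulVec_e0⟩,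
    fun _ _ _ _ _ _ _ _ _ _ h => pMat_inj h⟩

/-- For every `a > 0`, row vector `b ∈ ℝⁿ` and `m ∈ O(h)`, the matrix `p(a,b,m)`
lies in `O(h̃)` and satisfies `p(a,b,m) e₀ = a e₀` (so `p(a,b,m) ∈ P`); moreover
`(a,b,m) ↦ p(a,b,m)` is injective on `ℝ₊ × ℝⁿ × O(h)`.  Hence `P` is parametrized
bijectively by `ℝ₊ × ℝⁿ × O(h)`. -/
theorem statement1 (p q : ℕ) (hn : 3 ≤ p + q) :
    (∀ (a : ℝ), 0 < a → ∀ (b : Fin (p + q) → ℝ)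
        (m : Matrix (Fin (p + q)) (Fin (p + q)) ℝ),
        mᵀ * hMat p q * m = hMat p q →
        (pMat p q a b m)ᵀ * htMat p q * pMat p q a b m = htMat p q ∧
        pMat p q a b m *ᵥ e0 p q = a • e0 p q) ∧
    (∀ (a₁ a₂ : ℝ) (b₁ b₂ : Fin (p + q) → ℝ)
        (m₁ m₂ : Matrix (Fin (p + q)) (Fin (p + q)) ℝ),
        0 < a₁ → 0 < a₂ →
        m₁ᵀ * hMat p q * m₁ = hMat p q → m₂ᵀ * hMat p q * m₂ = hMat p q →
        pMat p q a₁ b₁ m₁ = pMat p q a₂ b₂ m₂ →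
        a₁ = a₂ ∧ b₁ = b₂ ∧ m₁ = m₂) :=
  statement1_general p q
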